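/- arXiv:1806.03259 — 2 statements merged into one kernel-verified Lean document; each statement's English description precedes it below -/
import Mathlib

section
/- Fix an integer k ≥ 1. For every λ with 0 < λ < sin²(π/(4k+2)) and every phase φ ∈ (0,π], one has P_k^φ(λ) < 1; that is, k matched-phase Grover iterations cannot reach certainty for any λ below sin²(π/(4k+2)). -/
/-!
Put `c = 1 - λ(1 - cos φ) = cos δ`. Since `sin² θ = λ` and `sin² δ = 1 - c²`, a direct computation gives
`1 - P_k^φ(λ) = λ(1 - λ)(1 - cos φ)(1 + cos((2k+1)δ)) / sin² δ`,
so `P_k^φ(λ) < 1` as soon as `(2k+1)δ < π`. Because `1 - cos φ ≤ 2`, the hypothesis `λ < sin²(π/(4k+2))`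
forces `c > 1 - 2 sin²(π/(4k+2)) = cos(π/(2k+1))`, i.e. `δ < π/(2k+1)`.
-/

/-- The success probability `P_k^φ(λ)` of the matched-phase Grover algorithm after
`k` iterations: `P_k^φ(λ) = A·cos((2k+1)δ) + B` where `θ = arcsin √λ`,
`δ = arccos (1 − λ(1 − cos φ))`, `A = (sin²θ/sin²δ)(cos φ − cos δ)` and
`B = (sin²θ/sin²δ)(1 − cos φ·cos δ)`. -/
noncomputable def grovP (k : ℕ) (φ lam : ℝ) : ℝ :=
  let θ : ℝ := Real.arcsin (Real.sqrt lam)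
  let δ : ℝ := Real.arccos (1 - lam * (1 - Real.cos φ))
  let A : ℝ := Real.sin θ ^ 2 / Real.sin δ ^ 2 * (Real.cos φ - Real.cos δ)
  let B : ℝ := Real.sin θ ^ 2 / Real.sin δ ^ 2 * (1 - Real.cos φ * Real.cos δ)
  A * Real.cos ((2 * (k : ℝ) + 1) * δ) + B

/-- `φ_k^min = arccos(1 − (2 − 2cos(π/(2k+1)))/(1 − cos(π/(2k−1))))`. -/
noncomputable def phiMin (k : ℕ) : ℝ :=
  Real.arccos (1 - (2 - 2 * Real.cos (Real.pi / (2 * (k : ℝ) + 1))) /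
    (1 - Real.cos (Real.pi / (2 * (k : ℝ) - 1))))

open Real

noncomputable def grovDelta (φ lam : ℝ) : ℝ :=
  arccos (1 - lam * (1 - cos φ))

lemma grovP_eq (k : ℕ) (φ lam : ℝ) :
    grovP k φ lam =
      sin (arcsin √lam) ^ 2 / sin (grovDelta φ lam) ^ 2 *
          ((cos φ - cos (grovDelta φ lam)) * cos ((2 * k + 1) * grovDelta φ lam) +
            (1 - cos φ * cos (grovDelta φ lam))) := by
  simp only [grovP, grovDelta]
  ring

lemma cos_grovDelta {φ lam : ℝ} (h₀ : 0 ≤ lam) (h₁ : lam ≤ 1) :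
    cos (grovDelta φ lam) = 1 - lam * (1 - cos φ) := by
  have := neg_one_le_cos φ
  have := cos_le_one φ
  exact cos_arccos (by nlinarith) (by nlinarith)

lemma sin_arcsin_sqrt_sq {x : ℝ} (h₀ : 0 ≤ x) (h₁ : x ≤ 1) : sin (arcsin √x) ^ 2 = x := by
  rw [sin_arcsin (by linarith [sqrt_nonneg x]) (sqrt_le_one.mpr h₁), sq_sqrt h₀]

lemma one_sub_grovP {k : ℕ} {φ lam : ℝ} (h₀ : 0 ≤ lam) (h₁ : lam ≤ 1)
    (hδ : sin (grovDelta φ lam) ≠ 0) :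
    1 - grovP k φ lam =
      lam * (1 - lam) * (1 - cos φ) * (1 + cos ((2 * k + 1) * grovDelta φ lam)) /
        sin (grovDelta φ lam) ^ 2 := by
  have hsin : sin (grovDelta φ lam) ^ 2 = 1 - (1 - lam * (1 - cos φ)) ^ 2 := by
    rw [sin_sq, cos_grovDelta h₀ h₁]
  rw [grovP_eq, sin_arcsin_sqrt_sq h₀ h₁, cos_grovDelta h₀ h₁]
  field_simp
  rw [hsin]
  ring

lemma grovP_lt_one {k : ℕ} {φ lam : ℝ} (h₀ : 0 < lam) (h₁ : lam < 1) (hφ : cos φ < 1)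
    (hδ : (2 * k + 1) * grovDelta φ lam < π) : grovP k φ lam < 1 := by
  have hφ' : 0 < 1 - cos φ := sub_pos.mpr hφ
  have h₁' : 0 < 1 - lam := sub_pos.mpr h₁
  have hδ₀ : 0 < grovDelta φ lam := arccos_pos.mpr (by nlinarith)
  have hδπ : grovDelta φ lam < π := by nlinarith [(k.cast_nonneg : (0 : ℝ) ≤ k)]
  have hsin : 0 < sin (grovDelta φ lam) := sin_pos_of_pos_of_lt_pi hδ₀ hδπ
  have hcos : 0 < 1 + cos ((2 * k + 1) * grovDelta φ lam) := by
    have := cos_lt_cos_of_nonneg_of_le_pi (by positivity) le_rfl hδ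
    rw [cos_pi] at this
    linarith
  have hgap : 0 < 1 - grovP k φ lam := by
    rw [one_sub_grovP h₀.le h₁.le hsin.ne']
    positivity
  linarith

lemma mul_grovDelta_lt_pi {k : ℕ} {φ lam : ℝ} (h₀ : 0 ≤ lam)
    (hlam : lam < sin (π / (4 * k + 2)) ^ 2) : (2 * k + 1) * grovDelta φ lam < π := by
  have hN : (0 : ℝ) < 2 * k + 1 := by positivity
  have hangle : π / (2 * k + 1) = 2 * (π / (4 * k + 2)) := by
    field_simp
    ring
  have hcos : cos (π / (2 * k + 1)) = 1 - 2 * sin (π / (4 * k + 2)) ^ 2 := by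
    rw [hangle, cos_two_mul, cos_sq']
    ring
  have hc₁ : 1 - lam * (1 - cos φ) ≤ 1 := by nlinarith [cos_le_one φ]
  have hc : cos (π / (2 * k + 1)) < 1 - lam * (1 - cos φ) := by
    rw [hcos]
    nlinarith [neg_one_le_cos φ]
  suffices grovDelta φ lam < π / (2 * k + 1) by rwa [lt_div_iff₀' hN] at this
  rw [← arccos_cos (by positivity) (div_le_self pi_pos.le (by linarith [k.cast_nonneg (α := ℝ)]))]
  exact arccos_lt_arccos (neg_one_le_cos _) hc hc₁

theorem no_certainty_below_threshold_general
    (k : ℕ) (lam : ℝ)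
    (hlam : 0 < lam ∧ lam < Real.sin (Real.pi / (4 * (k : ℝ) + 2)) ^ 2)
    (φ : ℝ) (hφ : φ ∈ Set.Ioc (0 : ℝ) Real.pi) :
    grovP k φ lam < 1 := by
  obtain ⟨hlam₀, hlam⟩ := hlam
  have hlam₁ : lam < 1 := hlam.trans_le (sin_sq_le_one _)
  have hφ : cos φ < 1 := by
    simpa using cos_lt_cos_of_nonneg_of_le_pi le_rfl hφ.2 hφ.1
  exact grovP_lt_one hlam₀ hlam₁ hφ (mul_grovDelta_lt_pi hlam₀.le hlam)

/-- For k ≥ 1, every λ with 0 < λ < sin²(π/(4k+2)) and every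
φ ∈ (0,π], one has P_k^φ(λ) < 1. -/
theorem no_certainty_below_threshold
    (k : ℕ) (hk : 1 ≤ k) (lam : ℝ)
    (hlam : 0 < lam ∧ lam < Real.sin (Real.pi / (4 * (k : ℝ) + 2)) ^ 2)
    (φ : ℝ) (hφ : φ ∈ Set.Ioc (0 : ℝ) Real.pi) :
    grovP k φ lam < 1 :=
  no_certainty_below_threshold_general k lam hlam φ hφ
end

section
/- Fix an integer k ≥ 2, let φ_k^min = arccos(1 − (2 − 2cos(π/(2k+1)))/(1 − cos(π/(2k−1)))), and let φ ∈ (φ_k^min, π]. Then the function λ ↦ P_k^φ(λ) is strictly increasing on [sin²(π/(4k+2)), λ_{k,1}^{φ,max}] and strictly decreasing on [λ_{k,1}^{φ,max}, sin²(π/(4k−2))], where λ_{k,1}^{φ,max} = (1 − cos(π/(2k+1)))/(1 − cos φ). -/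
/-! Write `p = sin (φ/2)`, so that `cos φ = 1 - 2p²`, and `u = δ/2 = arcsin (p √λ)`, which
increases with `λ`. Then `1 - P_k^φ(λ) = (1 - cot²(φ/2) tan² u) cos² (m u)` with `m = 2k+1`, and
`λ = λ_{k,1}^{φ,max}` corresponds to `u = π/(2m)`, where the second factor vanishes. Before that
point both factors are positive and decreasing. After it (and `u ≤ π/(4k-2)` on the interval) the
growth of the second factor wins: the derivative is `-2 cos (m u) > 0` times a positive multiple of
`m (p² - sin² u) sin (m u) cos u + (1 - p²) sin u cos (m u)`, which is positive once `p ≥ 1/3`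
because `sin (m u) ≥ sin (π/(4k-2)) ≥ sin u / p`. Finally `φ > φ_k^min` says exactly
`sin (π/(4k+2)) < p sin (π/(4k-2))`, which together with `2x/π ≤ sin x ≤ x` forces `p > 1/3`. -/

open Real Set

lemma cos_pi_div_eq_one_sub (x : ℝ) : cos (π / x) = 1 - 2 * sin (π / (2 * x)) ^ 2 := by
  rw [← cos_two_mul_eq_one_sub, mul_div_assoc', mul_div_mul_left _ _ two_ne_zero]

lemma mul_pi_div_two_mul {m : ℝ} (hm : m ≠ 0) : m * (π / (2 * m)) = π / 2 := by
  field_simp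

lemma pi_div_two_mul_mem_Ioo {x : ℝ} (hx : 1 < x) : π / (2 * x) ∈ Ioo 0 (π / 2) :=
  ⟨div_pos pi_pos (by linarith), div_lt_div_of_pos_left pi_pos two_pos (by linarith)⟩

lemma sin_pi_div_two_mul_mem_Ioo {x : ℝ} (hx : 1 < x) : sin (π / (2 * x)) ∈ Ioo 0 1 := by
  obtain ⟨h0, h1⟩ := pi_div_two_mul_mem_Ioo hx
  exact ⟨sin_pos_of_pos_of_lt_pi h0 (by linarith [pi_pos]),
    (sin_lt_sin_of_lt_of_le_pi_div_two (by linarith [pi_pos]) le_rfl h1).trans_eq sin_pi_div_two⟩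

lemma sin_pi_div_two_mul_le_sin_mul {m n u : ℝ} (hn : 0 < n) (hnm : n ≤ m)
    (hmn : m + 1 ≤ 2 * n) (hu : π / (2 * m) ≤ u) (hu' : u ≤ π / (2 * n)) :
    sin (π / (2 * n)) ≤ sin (m * u) := by
  have hm : 0 < m := hn.trans_le hnm
  have hmu : π / 2 ≤ m * u := mul_pi_div_two_mul hm.ne' ▸ mul_le_mul_of_nonneg_left hu hm.le
  have hmu' : m * u + π / (2 * n) ≤ π := by
    calc m * u + π / (2 * n) ≤ (m + 1) * (π / (2 * n)) := by nlinarith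
      _ ≤ π := by rw [mul_div_assoc', div_le_iff₀ (by positivity)]; nlinarith [pi_pos]
  have hb0 : 0 < π / (2 * n) := by positivity
  rw [← sin_pi_sub (m * u)]
  exact sin_le_sin_of_le_of_le_pi_div_two (by linarith [pi_pos]) (by linarith) (by linarith)

lemma sin_pi_div_lt_three_mul_sin {k : ℝ} (hk : 2 ≤ k) :
    sin (π / (4 * k - 2)) < 3 * sin (π / (4 * k + 2)) := by
  have hk0 : 0 < 4 * k - 2 := by linarith
  calc sin (π / (4 * k - 2)) ≤ π / (4 * k - 2) := sin_le (by positivity)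
    _ < 3 * (2 / π * (π / (4 * k + 2))) := by
      rw [div_lt_iff₀ hk0]
      field_simp
      nlinarith [pi_lt_d2, pi_pos]
    _ ≤ 3 * sin (π / (4 * k + 2)) := by
      gcongr
      exact mul_le_sin (by positivity) (div_le_div_of_nonneg_left pi_pos.le two_pos (by linarith))

noncomputable def grovFail (m p u : ℝ) : ℝ :=
  (1 - (1 - p ^ 2) / p ^ 2 * tan u ^ 2) * cos (m * u) ^ 2

lemma grovP_eq_one_sub_grovFail (k : ℕ) {φ p lam : ℝ} (hp : 0 < p)
    (hcos : cos φ = 1 - 2 * p ^ 2) (hlam : lam ∈ Ioo 0 1) :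
    grovP k φ lam = 1 - grovFail (2 * k + 1) p (arcsin (p * √lam)) := by
  obtain ⟨h0, h1⟩ := hlam
  have hp1 : p ^ 2 ≤ 1 := by nlinarith [neg_one_le_cos φ]
  have hpl : 1 - lam * p ^ 2 ≠ 0 := by nlinarith
  set u := arcsin (p * √lam)
  have hs2 : sin u ^ 2 = p ^ 2 * lam := by
    rw [sin_arcsin (by nlinarith [sqrt_nonneg lam])
      (by nlinarith [sqrt_nonneg lam, sqrt_le_one.2 h1.le]), mul_pow, sq_sqrt h0.le]
  have hc2 : cos u ^ 2 = 1 - p ^ 2 * lam := by rw [cos_sq', hs2]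
  have hu0 : 0 ≤ u := arcsin_nonneg.2 (by positivity)
  have hδ : arccos (1 - lam * (1 - cos φ)) = 2 * u := by
    rw [← arccos_cos (x := 2 * u) (by linarith) (by linarith [arcsin_le_pi_div_two (p * √lam)]),
      cos_two_mul_eq_one_sub, hs2, hcos]
    ring_nf
  have hθ : sin (arcsin √lam) ^ 2 = lam := by
    rw [sin_arcsin (by linarith [sqrt_nonneg lam]) (sqrt_le_one.2 h1.le), sq_sqrt h0.le]
  have hm : cos ((2 * (k : ℝ) + 1) * (2 * u)) = 2 * cos ((2 * k + 1) * u) ^ 2 - 1 := by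
    rw [← cos_two_mul]; ring_nf
  simp only [grovP, grovFail]
  rw [hδ, hθ, hm, sin_two_mul, cos_two_mul, mul_pow, mul_pow, hc2, hs2, tan_eq_sin_div_cos,
    div_pow, hc2, hs2, hcos]
  field_simp
  ring

lemma strictMonoOn_arcsin_mul_sqrt {p : ℝ} (hp : 0 < p) (hp1 : p ≤ 1) :
    StrictMonoOn (fun x => arcsin (p * √x)) (Icc 0 1) := by
  have hmem : ∀ z ∈ Icc (0 : ℝ) 1, p * √z ∈ Icc (-1) 1 := fun z hz =>
    ⟨by nlinarith [sqrt_nonneg z], by nlinarith [sqrt_nonneg z, sqrt_le_one.2 hz.2]⟩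
  exact fun x hx y hy hxy => strictMonoOn_arcsin (hmem x hx) (hmem y hy)
    (mul_lt_mul_of_pos_left (sqrt_lt_sqrt hx.1 hxy) hp)

lemma strictMonoOn_grovP_of_strictAntiOn (k : ℕ) {φ p x y : ℝ} (hp : 0 < p)
    (hcos : cos φ = 1 - 2 * p ^ 2) (hx : 0 < x) (hy : y < 1)
    (h : StrictAntiOn (grovFail (2 * k + 1) p) (Icc (arcsin (p * √x)) (arcsin (p * √y)))) :
    StrictMonoOn (grovP k φ) (Icc x y) := by
  have hg := (strictMonoOn_arcsin_mul_sqrt hp (by nlinarith [neg_one_le_cos φ])).mono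
    (Icc_subset_Icc hx.le hy.le)
  refine ((h.comp_strictMonoOn hg hg.monotoneOn.mapsTo_Icc).neg.const_add 1).congr fun l hl => ?_
  rw [grovP_eq_one_sub_grovFail k hp hcos ⟨hx.trans_le hl.1, hl.2.trans_lt hy⟩]
  simp only [Function.comp_apply]
  ring

lemma strictAntiOn_grovP_of_strictMonoOn (k : ℕ) {φ p x y : ℝ} (hp : 0 < p)
    (hcos : cos φ = 1 - 2 * p ^ 2) (hx : 0 < x) (hy : y < 1)
    (h : StrictMonoOn (grovFail (2 * k + 1) p) (Icc (arcsin (p * √x)) (arcsin (p * √y)))) :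
    StrictAntiOn (grovP k φ) (Icc x y) := by
  have hg := (strictMonoOn_arcsin_mul_sqrt hp (by nlinarith [neg_one_le_cos φ])).mono
    (Icc_subset_Icc hx.le hy.le)
  refine ((h.comp hg hg.monotoneOn.mapsTo_Icc).neg.const_add 1).congr fun l hl => ?_
  rw [grovP_eq_one_sub_grovFail k hp hcos ⟨hx.trans_le hl.1, hl.2.trans_lt hy⟩]
  simp only [Function.comp_apply]
  ring

lemma hasDerivAt_grovFail (m p : ℝ) {u : ℝ} (hu : cos u ≠ 0) :
    HasDerivAt (grovFail m p)
      (-2 * cos (m * u) * (m * (1 - (1 - p ^ 2) / p ^ 2 * tan u ^ 2) * sin (m * u)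
        + (1 - p ^ 2) / p ^ 2 * tan u / cos u ^ 2 * cos (m * u))) u := by
  have htan := ((hasDerivAt_tan hu).pow 2).const_mul ((1 - p ^ 2) / p ^ 2) |>.const_sub 1
  have hcos := ((hasDerivAt_id u).const_mul m).cos.pow 2
  refine (htan.mul hcos).congr_deriv ?_
  simp only [Pi.pow_apply, id]
  ring

lemma grovFail_strictAntiOn {m p : ℝ} (hm : 1 < m) (hp : 0 < p) (hp1 : p ≤ 1)
    (hpm : sin (π / (2 * m)) < p) :
    StrictAntiOn (grovFail m p) (Icc 0 (π / (2 * m))) := by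
  have hm0 : 0 < m := by linarith
  obtain ⟨ha0, ha⟩ := pi_div_two_mul_mem_Ioo hm
  set c := (1 - p ^ 2) / p ^ 2
  have hc : 0 ≤ c := div_nonneg (by nlinarith) (by positivity)
  have hca : c * tan (π / (2 * m)) ^ 2 < 1 := by
    have hsin := (sin_pi_div_two_mul_mem_Ioo hm).1
    have hs1 : sin (π / (2 * m)) ^ 2 < p ^ 2 := by gcongr
    rw [tan_eq_sin_div_cos, div_pow, cos_sq', div_mul_div_comm,
      div_lt_one (mul_pos (by positivity) (by nlinarith))]
    nlinarith
  have htan : MonotoneOn (fun u => tan u ^ 2) (Icc 0 (π / (2 * m))) := fun x hx y hy hxy =>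
    pow_le_pow_left₀ (tan_nonneg_of_nonneg_of_le_pi_div_two hx.1 (hx.2.trans ha.le))
      (strictMonoOn_tan.monotoneOn ⟨by linarith [hx.1, pi_pos], hx.2.trans_lt ha⟩
        ⟨by linarith [hy.1, pi_pos], hy.2.trans_lt ha⟩ hxy) 2
  have hcos : StrictAntiOn (fun u => cos (m * u) ^ 2) (Icc 0 (π / (2 * m))) := by
    intro x hx y hy hxy
    have hmy : m * y ≤ π / 2 :=
      mul_pi_div_two_mul hm0.ne' ▸ mul_le_mul_of_nonneg_left hy.2 hm0.le
    exact pow_lt_pow_left₀ (cos_lt_cos_of_nonneg_of_le_pi (by nlinarith [hx.1])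
      (by linarith [pi_pos]) (by nlinarith))
      (cos_nonneg_of_neg_pi_div_two_le_of_le (by nlinarith [hy.1, pi_pos]) hmy) two_ne_zero
  intro x hx y hy hxy
  have hfy : 0 < 1 - c * tan y ^ 2 := by
    nlinarith [mul_le_mul_of_nonneg_left (htan hy ⟨ha0.le, le_rfl⟩ hy.2) hc]
  have hf : 1 - c * tan y ^ 2 ≤ 1 - c * tan x ^ 2 := by
    nlinarith [mul_le_mul_of_nonneg_left (htan hx hy hxy.le) hc]
  calc (1 - c * tan y ^ 2) * cos (m * y) ^ 2 < (1 - c * tan y ^ 2) * cos (m * x) ^ 2 :=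
        mul_lt_mul_of_pos_left (hcos hx hy hxy) hfy
    _ ≤ (1 - c * tan x ^ 2) * cos (m * x) ^ 2 := mul_le_mul_of_nonneg_right hf (sq_nonneg _)

lemma grovFail_deriv_factor_pos {m p σ u : ℝ} (hm : 5 ≤ m) (hp : 1 / 3 ≤ p) (hp1 : p ≤ 1)
    (hσ : σ ≤ 1 / 2) (hu : 0 < cos u) (hsin0 : 0 < sin u) (hsin : sin u ≤ p * σ)
    (hσm : σ ≤ sin (m * u)) :
    0 < m * (1 - (1 - p ^ 2) / p ^ 2 * tan u ^ 2) * sin (m * u)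
      + (1 - p ^ 2) / p ^ 2 * tan u / cos u ^ 2 * cos (m * u) := by
  have hp0 : 0 < p := by linarith
  have hσ0 : 0 < σ := by nlinarith
  have hsq : sin u ^ 2 ≤ p ^ 2 * σ ^ 2 := by
    simpa [mul_pow] using pow_le_pow_left₀ hsin0.le hsin 2
  have hσ2 : σ ^ 2 ≤ 1 / 4 := by nlinarith
  have hw : 4 / 5 ≤ cos u := by nlinarith [cos_sq' u]
  have hs2 : 3 / 4 * p ^ 2 ≤ p ^ 2 - sin u ^ 2 := by nlinarith
  have hfirst : 3 * p ^ 2 * σ ≤ m * (p ^ 2 - sin u ^ 2) * sin (m * u) * cos u :=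
    calc 3 * p ^ 2 * σ = 5 * (3 / 4 * p ^ 2) * σ * (4 / 5) := by ring
      _ ≤ _ := by
        have : 0 ≤ p ^ 2 - sin u ^ 2 := by nlinarith
        have : 0 ≤ sin (m * u) := by linarith
        gcongr
  have hsecond : -((1 - p ^ 2) * (p * σ)) ≤ (1 - p ^ 2) * sin u * cos (m * u) := by
    have hA : 0 ≤ 1 - p ^ 2 := by nlinarith
    nlinarith [mul_nonneg (mul_nonneg hA hsin0.le) (by linarith [neg_one_le_cos (m * u)] :
      0 ≤ cos (m * u) + 1), mul_nonneg hA (sub_nonneg.2 hsin)]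
  have key : 0 < m * (p ^ 2 - sin u ^ 2) * sin (m * u) * cos u
      + (1 - p ^ 2) * sin u * cos (m * u) := by
    have : 0 < p * σ * (3 * p - 1 + p ^ 2) := mul_pos (mul_pos hp0 hσ0) (by nlinarith)
    linarith
  have heq : m * (1 - (1 - p ^ 2) / p ^ 2 * tan u ^ 2) * sin (m * u)
      + (1 - p ^ 2) / p ^ 2 * tan u / cos u ^ 2 * cos (m * u)
      = (m * (p ^ 2 - sin u ^ 2) * sin (m * u) * cos u + (1 - p ^ 2) * sin u * cos (m * u))
        / (p ^ 2 * cos u ^ 3) := by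
    rw [tan_eq_sin_div_cos]
    field_simp
    linear_combination (m * p ^ 2 * sin (m * u) * cos u) * (sin_sq_add_cos_sq u)
  rw [heq]
  positivity

lemma grovFail_strictMonoOn {m n p : ℝ} (hm : 5 ≤ m) (hnm : n ≤ m) (hmn : m + 1 ≤ 2 * n)
    (hp : 1 / 3 ≤ p) (hp1 : p ≤ 1) :
    StrictMonoOn (grovFail m p) (Icc (π / (2 * m)) (arcsin (p * sin (π / (2 * n))))) := by
  have hn : 0 < n := by linarith
  have hb0 := (pi_div_two_mul_mem_Ioo (by linarith : 1 < n)).1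
  have hσ0 := (sin_pi_div_two_mul_mem_Ioo (by linarith : 1 < n)).1
  have hb6 : π / (2 * n) ≤ π / 6 :=
    div_le_div_of_nonneg_left pi_pos.le (by norm_num) (by linarith)
  have hσ : sin (π / (2 * n)) ≤ 1 / 2 := sin_pi_div_six ▸
    sin_le_sin_of_le_of_le_pi_div_two (by linarith) (by linarith [pi_pos]) hb6
  have hpσ : p * sin (π / (2 * n)) ∈ Icc (-1) 1 := ⟨by nlinarith, by nlinarith⟩
  have hv : arcsin (p * sin (π / (2 * n))) ≤ π / (2 * n) :=
    (monotone_arcsin (by nlinarith)).trans_eq (arcsin_sin (by linarith) (by linarith [pi_pos]))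
  have hmem : ∀ u ∈ Icc (π / (2 * m)) (arcsin (p * sin (π / (2 * n)))), 0 < u ∧ 0 < cos u :=
    fun u hu =>
      have hu0 : 0 < u := lt_of_lt_of_le (by positivity) hu.1
      ⟨hu0, cos_pos_of_mem_Ioo ⟨by linarith, by linarith [hu.2, pi_pos]⟩⟩
  have hderiv : ∀ u ∈ Icc (π / (2 * m)) (arcsin (p * sin (π / (2 * n)))), HasDerivAt _ _ u :=
    fun u hu => hasDerivAt_grovFail m p (hmem u hu).2.ne'
  refine strictMonoOn_of_hasDerivWithinAt_pos (convex_Icc _ _)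
    (fun u hu => (hderiv u hu).continuousAt.continuousWithinAt)
    (fun u hu => (hderiv u (interior_subset hu)).hasDerivWithinAt) fun u hu => ?_
  rw [interior_Icc] at hu
  obtain ⟨hu0, hcosu⟩ := hmem u (Ioo_subset_Icc_self hu)
  have hmu : π / 2 < m * u := mul_pi_div_two_mul (by linarith : m ≠ 0) ▸
    mul_lt_mul_of_pos_left hu.1 (by linarith)
  have hmu' : m * u < π := by
    calc m * u < (2 * n) * (π / (2 * n)) := by nlinarith [hu.2]
      _ = π := by field_simp
  have hsin : sin u ≤ p * sin (π / (2 * n)) := by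
    rw [← sin_arcsin hpσ.1 hpσ.2]
    exact sin_le_sin_of_le_of_le_pi_div_two (by linarith) (arcsin_le_pi_div_two _) hu.2.le
  refine mul_pos (by nlinarith [cos_neg_of_pi_div_two_lt_of_lt hmu (by linarith)]) ?_
  exact grovFail_deriv_factor_pos hm hp hp1 hσ hcosu
    (sin_pos_of_pos_of_lt_pi hu0 (by linarith [hu.2, pi_pos])) hsin
    (sin_pi_div_two_mul_le_sin_mul hn hnm hmn hu.1.le (hu.2.le.trans hv))

lemma cos_phiMin {k : ℕ} (hk : 1 ≤ k) :
    cos (phiMin k) = 1 - 2 * (sin (π / (4 * k + 2)) / sin (π / (4 * k - 2))) ^ 2 := by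
  have hk' : (1 : ℝ) ≤ k := by exact_mod_cast hk
  have hab : π / (4 * k + 2) ≤ π / (4 * k - 2) :=
    div_le_div_of_nonneg_left pi_pos.le (by linarith) (by linarith)
  have hb : π / (4 * k - 2) ≤ π / 2 := div_le_div_of_nonneg_left pi_pos.le two_pos (by linarith)
  have ha0 : 0 < π / (4 * k + 2) := by positivity
  have hsa : 0 < sin (π / (4 * k + 2)) := sin_pos_of_pos_of_lt_pi ha0 (by linarith [pi_pos])
  have hsab : sin (π / (4 * k + 2)) ≤ sin (π / (4 * k - 2)) :=
    sin_le_sin_of_le_of_le_pi_div_two (by linarith [pi_pos]) hb hab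
  have hsb := hsa.trans_le hsab
  have hratio : (sin (π / (4 * k + 2)) / sin (π / (4 * k - 2))) ^ 2 ≤ 1 :=
    pow_le_one₀ (by positivity) ((div_le_one hsb).2 hsab)
  have harg : 1 - (2 - 2 * cos (π / (2 * k + 1))) / (1 - cos (π / (2 * k - 1)))
      = 1 - 2 * (sin (π / (4 * k + 2)) / sin (π / (4 * k - 2))) ^ 2 := by
    rw [show (4 : ℝ) * k + 2 = 2 * (2 * k + 1) by ring,
      show (4 : ℝ) * k - 2 = 2 * (2 * k - 1) by ring,
      cos_pi_div_eq_one_sub, cos_pi_div_eq_one_sub]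
    field_simp
    ring
  rw [phiMin, harg, cos_arccos (by linarith) (by nlinarith)]

lemma sin_lt_sin_half_mul_sin_of_phiMin_lt {k : ℕ} (hk : 1 ≤ k) {φ : ℝ}
    (hφ : φ ∈ Ioc (phiMin k) π) :
    sin (π / (4 * k + 2)) < sin (φ / 2) * sin (π / (4 * k - 2)) := by
  have hk' : (1 : ℝ) ≤ k := by exact_mod_cast hk
  have hsb : 0 < sin (π / (4 * k - 2)) := sin_pos_of_pos_of_lt_pi (div_pos pi_pos (by linarith))
    (div_lt_self pi_pos (by linarith))
  have hφ0 : 0 ≤ φ := (arccos_nonneg _).trans hφ.1.le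
  have hlt : cos φ < cos (phiMin k) :=
    strictAntiOn_cos ⟨arccos_nonneg _, arccos_le_pi _⟩ ⟨hφ0, hφ.2⟩ hφ.1
  have hcos : cos φ = 1 - 2 * sin (φ / 2) ^ 2 := by rw [← cos_two_mul_eq_one_sub]; ring_nf
  rw [cos_phiMin hk, hcos] at hlt
  rw [← div_lt_iff₀ hsb]
  exact lt_of_pow_lt_pow_left₀ 2
    (sin_nonneg_of_nonneg_of_le_pi (by linarith) (by linarith [hφ.2, pi_pos])) (by linarith)

lemma one_third_lt_sin_half_of_phiMin_lt {k : ℕ} (hk : 2 ≤ k) {φ : ℝ}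
    (hφ : φ ∈ Ioc (phiMin k) π) : 1 / 3 < sin (φ / 2) := by
  have hk' : (2 : ℝ) ≤ k := by exact_mod_cast hk
  have h := sin_lt_sin_half_mul_sin_of_phiMin_lt (by omega) hφ
  have h3 := sin_pi_div_lt_three_mul_sin hk'
  have hb : 0 < sin (π / (4 * k - 2)) :=
    sin_pos_of_pos_of_lt_pi (div_pos pi_pos (by linarith)) (div_lt_self pi_pos (by linarith))
  nlinarith

lemma grovP_strictMonoOn_Icc {k : ℕ} (hk : 1 ≤ k) {φ p : ℝ} (hp : 0 < p)
    (hcos : cos φ = 1 - 2 * p ^ 2) (hpk : sin (π / (4 * k + 2)) < p) :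
    StrictMonoOn (grovP k φ)
      (Icc (sin (π / (4 * k + 2)) ^ 2) ((sin (π / (4 * k + 2)) / p) ^ 2)) := by
  have hm : (1 : ℝ) < 2 * k + 1 := by
    have : (1 : ℝ) ≤ k := by exact_mod_cast hk
    linarith
  rw [show (4 : ℝ) * k + 2 = 2 * (2 * k + 1) by ring] at hpk ⊢
  have ha := pi_div_two_mul_mem_Ioo hm
  have hsa := (sin_pi_div_two_mul_mem_Ioo hm).1
  have hr : sin (π / (2 * (2 * k + 1))) / p < 1 := (div_lt_one hp).2 hpk
  refine strictMonoOn_grovP_of_strictAntiOn k hp hcos (by positivity)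
    (pow_lt_one₀ (by positivity) hr two_ne_zero) ?_
  rw [sqrt_sq (div_pos hsa hp).le, mul_div_cancel₀ _ hp.ne',
    arcsin_sin (by linarith [ha.1, pi_pos]) ha.2.le]
  exact (grovFail_strictAntiOn hm hp (by nlinarith [neg_one_le_cos φ]) hpk).mono
    (Icc_subset_Icc (arcsin_nonneg.2 (by positivity)) le_rfl)

lemma grovP_strictAntiOn_Icc {k : ℕ} (hk : 2 ≤ k) {φ p : ℝ} (hp : 1 / 3 ≤ p)
    (hcos : cos φ = 1 - 2 * p ^ 2) :
    StrictAntiOn (grovP k φ)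
      (Icc ((sin (π / (4 * k + 2)) / p) ^ 2) (sin (π / (4 * k - 2)) ^ 2)) := by
  have hk' : (2 : ℝ) ≤ k := by exact_mod_cast hk
  have hp0 : 0 < p := by linarith
  rw [show (4 : ℝ) * k + 2 = 2 * (2 * k + 1) by ring,
    show (4 : ℝ) * k - 2 = 2 * (2 * k - 1) by ring]
  have ha := pi_div_two_mul_mem_Ioo (by linarith : (1 : ℝ) < 2 * k + 1)
  have hsa := (sin_pi_div_two_mul_mem_Ioo (by linarith : (1 : ℝ) < 2 * k + 1)).1
  obtain ⟨hsb, hsb1⟩ := sin_pi_div_two_mul_mem_Ioo (by linarith : (1 : ℝ) < 2 * k - 1)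
  refine strictAntiOn_grovP_of_strictMonoOn k hp0 hcos (by positivity)
    (pow_lt_one₀ hsb.le hsb1 two_ne_zero) ?_
  rw [sqrt_sq (div_pos hsa hp0).le, mul_div_cancel₀ _ hp0.ne', sqrt_sq hsb.le,
    arcsin_sin (by linarith [ha.1, pi_pos]) ha.2.le]
  exact grovFail_strictMonoOn (by linarith) (by linarith) (by linarith) hp
    (by nlinarith [neg_one_le_cos φ])

/-- For k ≥ 2 and φ ∈ (φ_k^min, π], the function λ ↦ P_k^φ(λ) is
strictly increasing on [sin²(π/(4k+2)), λ_{k,1}^{φ,max}] and strictly decreasing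
on [λ_{k,1}^{φ,max}, sin²(π/(4k−2))], where
λ_{k,1}^{φ,max} = (1 − cos(π/(2k+1)))/(1 − cos φ). -/
theorem monotonicity_around_first_max
    (k : ℕ) (hk : 2 ≤ k) (φ : ℝ) (hφ : φ ∈ Set.Ioc (phiMin k) Real.pi)
    (lamMax : ℝ)
    (hlamMax : lamMax = (1 - Real.cos (Real.pi / (2 * (k : ℝ) + 1))) / (1 - Real.cos φ)) :
    StrictMonoOn (grovP k φ)
        (Set.Icc (Real.sin (Real.pi / (4 * (k : ℝ) + 2)) ^ 2) lamMax) ∧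
      StrictAntiOn (grovP k φ)
        (Set.Icc lamMax (Real.sin (Real.pi / (4 * (k : ℝ) - 2)) ^ 2)) := by
  have hp := one_third_lt_sin_half_of_phiMin_lt hk hφ
  have hσ := sin_lt_sin_half_mul_sin_of_phiMin_lt (by omega) hφ
  have hcos : cos φ = 1 - 2 * sin (φ / 2) ^ 2 := by rw [← cos_two_mul_eq_one_sub]; ring_nf
  have hlam : lamMax = (sin (π / (4 * k + 2)) / sin (φ / 2)) ^ 2 := by
    rw [hlamMax, hcos, cos_pi_div_eq_one_sub, show 2 * (2 * (k : ℝ) + 1) = 4 * k + 2 by ring]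
    field_simp
    ring
  have hpk : sin (π / (4 * k + 2)) < sin (φ / 2) :=
    hσ.trans_le (mul_le_of_le_one_right (by linarith) (sin_le_one _))
  rw [hlam]
  exact ⟨grovP_strictMonoOn_Icc (by omega) (by linarith) hcos hpk,
    grovP_strictAntiOn_Icc hk hp.le hcos⟩
end
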